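/- arXiv:2401.01338 — 2 statements merged into one kernel-verified Lean document; each statement's English description precedes it below -/
import Mathlib

section
/- Let a, b be natural numbers, ε > 0 a real number, and λ : ℝ → ℝ a continuously differentiable function with λ'(t) ≤ 0 for all t and λ(0) = 1. Define g : ℝ^a × ℝ^b → ℝ by g(x,y) = ‖x‖² − ‖y‖² − (3ε/2)·λ(‖x‖²/ε). Then g is differentiable, its only critical point is the origin (0,0), and g(0,0) = −3ε/2. In particular, g has no critical points in the set g⁻¹([−5ε/4, 5ε/4]). -/
/-!
The derivative of `g` at `(x, y)` sends `(x, 0)` to `2‖x‖² (1 - (3/2) λ'(‖x‖²/ε))`, where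
`λ' ≤ 0` makes the bracket at least `1`, and sends `(0, y)` to `-2‖y‖²`. So a critical point has
`x = 0` and `y = 0`, and `g(0, 0) = -3ε/2` lies outside `[-5ε/4, 5ε/4]`.
-/

section PerturbedSaddle

variable {E F : Type*} [NormedAddCommGroup E] [NormedAddCommGroup F]

noncomputable def perturbedSaddle (c ε : ℝ) (lam : ℝ → ℝ) (q : E × F) : ℝ :=
  ‖q.1‖ ^ 2 - ‖q.2‖ ^ 2 - c * lam (‖q.1‖ ^ 2 / ε)

@[simp]
theorem perturbedSaddle_zero (c ε : ℝ) (lam : ℝ → ℝ) :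
    perturbedSaddle c ε lam (0 : E × F) = -(c * lam 0) := by
  simp [perturbedSaddle]

variable [InnerProductSpace ℝ E] [InnerProductSpace ℝ F]

theorem hasFDerivAt_perturbedSaddle {c ε : ℝ} {lam : ℝ → ℝ} {p : E × F}
    (hlam : DifferentiableAt ℝ lam (‖p.1‖ ^ 2 / ε)) :
    HasFDerivAt (perturbedSaddle c ε lam)
      ((2 * (1 - c / ε * deriv lam (‖p.1‖ ^ 2 / ε))) •
          (innerSL ℝ p.1).comp (ContinuousLinearMap.fst ℝ E F)
        - (2 : ℝ) • (innerSL ℝ p.2).comp (ContinuousLinearMap.snd ℝ E F)) p := by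
  have hx : HasFDerivAt (fun q : E × F => ‖q.1‖ ^ 2)
      (2 • (innerSL ℝ p.1).comp (ContinuousLinearMap.fst ℝ E F)) p :=
    hasFDerivAt_fst.norm_sq
  have hy : HasFDerivAt (fun q : E × F => ‖q.2‖ ^ 2)
      (2 • (innerSL ℝ p.2).comp (ContinuousLinearMap.snd ℝ E F)) p :=
    hasFDerivAt_snd.norm_sq
  have hlamx := (hlam.hasDerivAt.comp_hasFDerivAt p (hx.mul_const ε⁻¹)).const_mul c
  refine ((hx.sub hy).sub hlamx).congr_fderiv (ContinuousLinearMap.ext fun q => ?_)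
  simp only [_root_.sub_apply, _root_.smul_apply,
    ContinuousLinearMap.comp_apply, ContinuousLinearMap.coe_fst', ContinuousLinearMap.coe_snd',
    innerSL_apply_apply, smul_eq_mul, nsmul_eq_mul, Nat.cast_ofNat]
  ring

theorem differentiable_perturbedSaddle {c ε : ℝ} {lam : ℝ → ℝ} (hlam : Differentiable ℝ lam) :
    Differentiable ℝ (perturbedSaddle (E := E) (F := F) c ε lam) :=
  fun _ => (hasFDerivAt_perturbedSaddle (hlam _)).differentiableAt

theorem fderiv_perturbedSaddle_eq_zero_iff {c ε : ℝ} {lam : ℝ → ℝ} (hc : 0 ≤ c) (hε : 0 ≤ ε)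
    (hlam : Differentiable ℝ lam) (hlam_anti : ∀ t, deriv lam t ≤ 0) {p : E × F} :
    fderiv ℝ (perturbedSaddle c ε lam) p = 0 ↔ p = 0 := by
  rw [(hasFDerivAt_perturbedSaddle (hlam _)).fderiv]
  constructor
  · intro h
    have hx := congrArg (fun L => L (p.1, 0)) h
    have hy := congrArg (fun L => L (0, p.2)) h
    simp only [_root_.sub_apply, _root_.smul_apply,
      ContinuousLinearMap.comp_apply, ContinuousLinearMap.coe_fst', ContinuousLinearMap.coe_snd',
      innerSL_apply_apply, _root_.zero_apply, smul_eq_mul, inner_zero_right,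
      real_inner_self_eq_norm_sq, mul_zero, sub_zero, zero_sub, neg_eq_zero] at hx hy
    have hfactor : 1 ≤ 1 - c / ε * deriv lam (‖p.1‖ ^ 2 / ε) := by
      have : 0 ≤ c / ε := div_nonneg hc hε
      nlinarith [hlam_anti (‖p.1‖ ^ 2 / ε)]
    have hp1 : ‖p.1‖ ^ 2 = 0 := (mul_eq_zero.mp hx).resolve_left (by linarith)
    have hp2 : ‖p.2‖ ^ 2 = 0 := by simpa using hy
    simp only [sq_eq_zero_iff, norm_eq_zero] at hp1 hp2
    exact Prod.ext hp1 hp2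
  · rintro rfl
    simp

end PerturbedSaddle

theorem stmt_1 (a b : ℕ) (ε : ℝ) (hε : 0 < ε) (lam : ℝ → ℝ)
    (hlam_C1 : ContDiff ℝ 1 lam) (hlam_deriv : ∀ t, deriv lam t ≤ 0)
    (hlam_zero : lam 0 = 1)
    (g : EuclideanSpace ℝ (Fin a) × EuclideanSpace ℝ (Fin b) → ℝ)
    (hg : ∀ p, g p = ‖p.1‖ ^ 2 - ‖p.2‖ ^ 2 - (3 * ε / 2) * lam (‖p.1‖ ^ 2 / ε)) :
    Differentiable ℝ g ∧ (∀ p, fderiv ℝ g p = 0 ↔ p = 0) ∧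
      g 0 = -(3 * ε / 2) ∧
      ∀ p, g p ∈ Set.Icc (-(5 * ε / 4)) (5 * ε / 4) → fderiv ℝ g p ≠ 0 := by
  obtain rfl : g = perturbedSaddle (3 * ε / 2) ε lam := funext hg
  have hlam := hlam_C1.differentiable one_ne_zero
  have hcrit (p : EuclideanSpace ℝ (Fin a) × EuclideanSpace ℝ (Fin b)) :
      fderiv ℝ (perturbedSaddle (3 * ε / 2) ε lam) p = 0 ↔ p = 0 :=
    fderiv_perturbedSaddle_eq_zero_iff (by positivity) hε.le hlam hlam_deriv
  have hzero : perturbedSaddle (3 * ε / 2) ε lam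
      (0 : EuclideanSpace ℝ (Fin a) × EuclideanSpace ℝ (Fin b)) = -(3 * ε / 2) := by
    simp [hlam_zero]
  refine ⟨differentiable_perturbedSaddle hlam, hcrit, hzero, fun p hp hp_crit => ?_⟩
  obtain rfl := (hcrit p).mp hp_crit
  rw [hzero] at hp
  linarith [hp.1]
end

section
/- Let E be a finite-dimensional real inner product space, ω a nondegenerate alternating bilinear form on E, and A : E → E an invertible linear map which is skew-adjoint with respect to the inner product (⟨Av, w⟩ = −⟨v, Aw⟩) and infinitesimally symplectic (ω(Av, w) + ω(v, Aw) = 0 for all v, w). Then the bilinear form Q(v, w) = ω(Av, w) is symmetric and nondegenerate, and its negative index (the maximal dimension of a subspace on which Q is negative definite) is even. -/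
/-!
Represent `Q` by the self-adjoint operator `S` with `⟪S v, w⟫ = Q v w`. The negative index of `Q`
is the dimension of the span `N` of the eigenvectors of `S` with negative eigenvalue, because `Q`
is nonnegative on the span of the remaining eigenvectors. Since `A` is infinitesimally symplectic
it commutes with `S`, hence preserves `N`; on `N` it is still skew-adjoint and injective, and an
invertible skew-symmetric matrix `M` of size `m` has even size because
`det M = det Mᵀ = (-1) ^ m * det M`.
-/

open Module Submodule
open scoped InnerProductSpace

noncomputable def negativeIndex {E : Type*} [AddCommGroup E] [Module ℝ E] (Q : E → E → ℝ) : ℕ :=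
  sSup {n : ℕ | ∃ W : Submodule ℝ E, finrank ℝ W = n ∧ ∀ v ∈ W, v ≠ 0 → Q v v < 0}

theorem negativeIndex_eq_finrank {E : Type*} [AddCommGroup E] [Module ℝ E] [FiniteDimensional ℝ E]
    {Q : E → E → ℝ} {N P : Submodule ℝ E} (hN : ∀ v ∈ N, v ≠ 0 → Q v v < 0)
    (hP : ∀ v ∈ P, 0 ≤ Q v v) (hNP : Codisjoint N P) : negativeIndex Q = finrank ℝ N := by
  have hbound : ∀ W : Submodule ℝ E, (∀ v ∈ W, v ≠ 0 → Q v v < 0) → finrank ℝ W ≤ finrank ℝ N := by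
    intro W hW
    have hWP : Disjoint W P := disjoint_def.mpr fun v hvW hvP =>
      by_contra fun hv0 => (hW v hvW hv0).not_ge (hP v hvP)
    have hle := finrank_add_finrank_le_of_disjoint hWP
    have hge := finrank_add_le_finrank_add_finrank N P
    rw [hNP.eq_top, finrank_top] at hge
    omega
  refine le_antisymm (csSup_le ⟨_, N, rfl, hN⟩ ?_) (le_csSup ⟨finrank ℝ N, ?_⟩ ⟨N, rfl, hN⟩) <;>
  · rintro _ ⟨W, rfl, hW⟩
    exact hbound W hW

namespace LinearMap.IsSymmetric

variable {E : Type*} [NormedAddCommGroup E] [InnerProductSpace ℝ E] [FiniteDimensional ℝ E]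
  {T : E →ₗ[ℝ] E} (hT : T.IsSymmetric) {n : ℕ} (hn : finrank ℝ E = n)

noncomputable def spectralSpan (s : Set ℝ) : Submodule ℝ E :=
  span ℝ (hT.eigenvectorBasis hn '' (hT.eigenvalues hn ⁻¹' s))

theorem mem_spectralSpan_iff {s : Set ℝ} {v : E} :
    v ∈ hT.spectralSpan hn s ↔
      ∀ i, hT.eigenvalues hn i ∉ s → (hT.eigenvectorBasis hn).repr v i = 0 := by
  rw [spectralSpan, ← OrthonormalBasis.coe_toBasis, Basis.mem_span_image,
    Finsupp.support_subset_iff]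
  simp only [Set.mem_preimage, OrthonormalBasis.coe_toBasis_repr_apply]

theorem codisjoint_spectralSpan_compl (s : Set ℝ) :
    Codisjoint (hT.spectralSpan hn s) (hT.spectralSpan hn sᶜ) := by
  refine codisjoint_span_image_of_codisjoint ?_ (isCompl_compl.preimage _).codisjoint
  rw [← OrthonormalBasis.coe_toBasis, Basis.span_eq]

theorem inner_map_self_eq_sum (v : E) :
    ⟪T v, v⟫_ℝ = ∑ i, hT.eigenvalues hn i * (hT.eigenvectorBasis hn).repr v i ^ 2 := by
  rw [← (hT.eigenvectorBasis hn).sum_inner_mul_inner]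
  refine Finset.sum_congr rfl fun i _ => ?_
  rw [real_inner_comm, ← OrthonormalBasis.repr_apply_apply, ← OrthonormalBasis.repr_apply_apply,
    hT.eigenvectorBasis_apply_self_apply, RCLike.ofReal_real_eq_id, id_eq]
  ring

theorem eigenspace_le_spectralSpan {s : Set ℝ} {μ : ℝ} (hμ : μ ∈ s) :
    Module.End.eigenspace T μ ≤ hT.spectralSpan hn s := by
  intro x hx
  rw [hT.mem_spectralSpan_iff]
  intro i hi
  have hrepr := hT.eigenvectorBasis_apply_self_apply hn x i
  rw [Module.End.mem_eigenspace_iff.mp hx, map_smul, PiLp.smul_apply, smul_eq_mul] at hrepr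
  have hne : hT.eigenvalues hn i - μ ≠ 0 := sub_ne_zero.mpr (ne_of_mem_of_not_mem hμ hi).symm
  have hprod : (hT.eigenvalues hn i - μ) * (hT.eigenvectorBasis hn).repr x i = 0 := by
    linear_combination -hrepr
  exact (mul_eq_zero.mp hprod).resolve_left hne

theorem spectralSpan_le_comap_of_commute {A : E →ₗ[ℝ] E} (hA : Commute T A) (s : Set ℝ) :
    hT.spectralSpan hn s ≤ (hT.spectralSpan hn s).comap A := by
  refine span_le.mpr ?_
  rintro _ ⟨i, hi, rfl⟩
  refine hT.eigenspace_le_spectralSpan hn hi (Module.End.mem_eigenspace_iff.mpr ?_)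
  rw [← Module.End.mul_apply, hA.eq, Module.End.mul_apply, hT.apply_eigenvectorBasis, map_smul]
  rfl

theorem inner_map_self_neg_of_mem_spectralSpan {v : E} (hv : v ∈ hT.spectralSpan hn (Set.Iio 0))
    (hv0 : v ≠ 0) : ⟪T v, v⟫_ℝ < 0 := by
  have hcoef := (hT.mem_spectralSpan_iff hn).mp hv
  obtain ⟨i, hi⟩ : ∃ i, (hT.eigenvectorBasis hn).repr v i ≠ 0 := by
    by_contra! h
    exact hv0 ((hT.eigenvectorBasis hn).repr.map_eq_zero_iff.mp (by ext i; simp [h]))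
  rw [hT.inner_map_self_eq_sum hn]
  refine Finset.sum_neg' (fun j _ => ?_) ⟨i, Finset.mem_univ _, ?_⟩
  · by_cases hj : hT.eigenvalues hn j < 0
    · exact mul_nonpos_of_nonpos_of_nonneg hj.le (sq_nonneg _)
    · simp [hcoef j hj]
  · have hμ : hT.eigenvalues hn i < 0 := by_contra fun h => hi (hcoef i h)
    exact mul_neg_of_neg_of_pos hμ (by positivity)

theorem inner_map_self_nonneg_of_mem_spectralSpan {v : E}
    (hv : v ∈ hT.spectralSpan hn (Set.Ici 0)) : 0 ≤ ⟪T v, v⟫_ℝ := by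
  have hcoef := (hT.mem_spectralSpan_iff hn).mp hv
  rw [hT.inner_map_self_eq_sum hn]
  refine Finset.sum_nonneg fun j _ => ?_
  by_cases hj : 0 ≤ hT.eigenvalues hn j
  · exact mul_nonneg hj (sq_nonneg _)
  · simp [hcoef j hj]

end LinearMap.IsSymmetric

section

variable {E : Type*} [NormedAddCommGroup E] [InnerProductSpace ℝ E] [FiniteDimensional ℝ E]

theorem even_finrank_of_injective_of_inner_map_eq_neg {f : E →ₗ[ℝ] E}
    (hf_skew : ∀ x y, ⟪f x, y⟫_ℝ = -⟪x, f y⟫_ℝ) (hf : Function.Injective f) :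
    Even (finrank ℝ E) := by
  let b := stdOrthonormalBasis ℝ E
  set M := LinearMap.toMatrix b.toBasis b.toBasis f
  have hM : M.transpose = -M := by
    ext i j
    simp only [M, Matrix.transpose_apply, Matrix.neg_apply, LinearMap.toMatrix_apply,
      b.coe_toBasis_repr_apply, b.coe_toBasis, b.repr_apply_apply]
    rw [real_inner_comm, hf_skew]
  have hdet : M.det ≠ 0 := by
    rw [LinearMap.det_toMatrix, ← isUnit_iff_ne_zero, ← LinearMap.isUnit_iff_isUnit_det,
      LinearMap.isUnit_iff_ker_eq_bot, LinearMap.ker_eq_bot]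
    exact hf
  have hsign : M.det = (-1) ^ finrank ℝ E * M.det := by
    simpa only [Matrix.det_transpose, Matrix.det_neg, Fintype.card_fin] using congrArg Matrix.det hM
  refine (neg_one_pow_eq_one_iff_even (by norm_num)).mp (mul_right_cancel₀ hdet ?_)
  rw [one_mul, ← hsign]

theorem Submodule.even_finrank_of_le_comap (V : Submodule ℝ E) {f : E →ₗ[ℝ] E}
    (hf_skew : ∀ x y, ⟪f x, y⟫_ℝ = -⟪x, f y⟫_ℝ) (hf : Function.Injective f)
    (hV : V ≤ V.comap f) : Even (finrank ℝ V) :=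
  even_finrank_of_injective_of_inner_map_eq_neg (f := f.restrict fun _ hv => hV hv)
    (fun x y => hf_skew x y)
    (fun _ _ hxy => Subtype.ext (hf (congrArg Subtype.val hxy)))

theorem exists_linearMap_inner_eq (B : E →ₗ[ℝ] E →ₗ[ℝ] ℝ) :
    ∃ S : E →ₗ[ℝ] E, ∀ v w, ⟪S v, w⟫_ℝ = B v w :=
  ⟨LinearMap.BilinForm.symmCompOfNondegenerate B (innerₗ E)
    ⟨fun v hv => inner_self_eq_zero.mp (hv v), fun w hw => inner_self_eq_zero.mp (hw w)⟩,
    fun v w => LinearMap.BilinForm.symmCompOfNondegenerate_left_apply B (B₂ := innerₗ E) _ w v⟩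

end

theorem stmt_7 (E : Type*) [NormedAddCommGroup E] [InnerProductSpace ℝ E]
    [FiniteDimensional ℝ E]
    (ω : E →ₗ[ℝ] E →ₗ[ℝ] ℝ)
    (hω_alt : ∀ v : E, ω v v = 0)
    (hω_nondeg : ∀ v : E, (∀ w : E, ω v w = 0) → v = 0)
    (A : E →ₗ[ℝ] E) (hA_bij : Function.Bijective A)
    (hA_skew : ∀ v w : E, (inner ℝ (A v) w : ℝ) = -(inner ℝ v (A w) : ℝ))
    (hA_symp : ∀ v w : E, ω (A v) w + ω v (A w) = 0)
    (Q : E → E → ℝ) (hQ : ∀ v w, Q v w = ω (A v) w) :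
    (∀ v w : E, Q v w = Q w v) ∧
    (∀ v : E, (∀ w : E, Q v w = 0) → v = 0) ∧
    Even (sSup {n : ℕ | ∃ W : Submodule ℝ E, Module.finrank ℝ W = n ∧
      ∀ v ∈ W, v ≠ 0 → Q v v < 0}) := by
  have hQ_symm : ∀ v w, Q v w = Q w v := fun v w => by
    rw [hQ, hQ]
    linarith [hA_symp w v, LinearMap.IsAlt.neg hω_alt w (A v)]
  refine ⟨hQ_symm, fun v hv => hA_bij.injective ?_, ?_⟩
  · rw [map_zero]
    exact hω_nondeg _ fun w => (hQ v w).symm.trans (hv w)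
  obtain ⟨S, hS⟩ : ∃ S : E →ₗ[ℝ] E, ∀ v w, ⟪S v, w⟫_ℝ = Q v w :=
    let ⟨S, hS⟩ := exists_linearMap_inner_eq (ω ∘ₗ A)
    ⟨S, fun v w => (hS v w).trans (hQ v w).symm⟩
  have hS_symm : S.IsSymmetric := fun v w => by rw [hS, real_inner_comm, hS, hQ_symm]
  have hSA : Commute S A := LinearMap.ext fun v => ext_inner_right ℝ fun w => by
    rw [Module.End.mul_apply, Module.End.mul_apply, hS, hQ, hA_skew, hS, hQ]
    linarith [hA_symp (A v) w]
  have hcodisj := hS_symm.codisjoint_spectralSpan_compl rfl (Set.Iio 0)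
  rw [Set.compl_Iio] at hcodisj
  have hindex : negativeIndex Q = finrank ℝ (hS_symm.spectralSpan rfl (Set.Iio 0)) :=
    negativeIndex_eq_finrank
      (fun v hv hv0 => hS v v ▸ hS_symm.inner_map_self_neg_of_mem_spectralSpan rfl hv hv0)
      (fun v hv => hS v v ▸ hS_symm.inner_map_self_nonneg_of_mem_spectralSpan rfl hv) hcodisj
  change Even (negativeIndex Q)
  rw [hindex]
  exact Submodule.even_finrank_of_le_comap _ hA_skew hA_bij.injective
    (hS_symm.spectralSpan_le_comap_of_commute rfl hSA _)
end
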